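/- Suppose c > λ_max(Q_z). Then for every initialization x_0 ∈ X, the sequence (x_k) generated by the regularized Jacobi iteration converges to a point x* ∈ X that minimizes f over X. -/

import Mathlib

open Matrix Filter Topology
open scoped RealInnerProductSpace

noncomputable section

/-- The product decision space of `m` agents, agent `i` having an `n i`-dimensional
Euclidean decision vector; equipped with the (ℓ²-of-ℓ²) Euclidean norm. -/
abbrev JVec (m : ℕ) (n : Fin m → ℕ) :=
  PiLp 2 (fun i : Fin m => EuclideanSpace ℝ (Fin (n i)))

/-- `upd x i z` is the vector `(z, x^{-i})`: `x` with its `i`-th block replaced by `z`. -/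
def upd {m : ℕ} {n : Fin m → ℕ} (x : JVec m n) (i : Fin m)
    (z : EuclideanSpace ℝ (Fin (n i))) : JVec m n :=
  WithLp.toLp 2 (Function.update x.ofLp i z)
/-- The index set of the stacked vector `x = (x^1, …, x^m)`. -/
abbrev JIdx (m : ℕ) (n : Fin m → ℕ) := Σ i : Fin m, Fin (n i)

/-- Flatten a block vector into a plain vector indexed by `JIdx m n`. -/
def flat {m : ℕ} {n : Fin m → ℕ} (x : JVec m n) : JIdx m n → ℝ :=
  fun p => x p.1 p.2

/-- The block-diagonal part `Q_d` of `Q`: equal to `Q` on entries whose row and column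
indices lie in the same agent block, and zero elsewhere. -/
def blockDiagPart {m : ℕ} {n : Fin m → ℕ} (Q : Matrix (JIdx m n) (JIdx m n) ℝ) :
    Matrix (JIdx m n) (JIdx m n) ℝ :=
  Matrix.of fun p q => if p.1 = q.1 then Q p q else 0

/-- The quadratic objective `f(x) = xᵀ Q x + qᵀ x`. -/
def quadF {m : ℕ} {n : Fin m → ℕ} (Q : Matrix (JIdx m n) (JIdx m n) ℝ)
    (q : JIdx m n → ℝ) (x : JVec m n) : ℝ :=
  flat x ⬝ᵥ (Q *ᵥ flat x) + q ⬝ᵥ flat x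

/-- The largest eigenvalue of a real symmetric (Hermitian) matrix. -/
noncomputable def maxEig {ι : Type*} [Fintype ι] [DecidableEq ι]
    {A : Matrix ι ι ℝ} (hA : A.IsHermitian) : ℝ :=
  ⨆ p, hA.eigenvalues p

/-!
Summing the agents' optimality conditions shows that a regularized Jacobi sweep is a
proximal-point step: `x_{k+1}` minimises `f z + β (z - x_k) (z - x_k)` over `X`, where
`β u u = c‖u‖² - uᵀ Q_z u` is coercive exactly because `c > λ_max(Q_z)`. Since `f` is convex, a
proximal step satisfies the three-point inequality. It makes `f(x_k)` decrease to `min_X f` at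
rate `O(1/k)`, and makes the `β`-distance to any minimiser non-increasing (Fejér monotonicity).
By compactness some subsequence converges; its limit is a minimiser, and Fejér monotonicity
upgrades the subsequential convergence to convergence of the whole sequence.
-/

open LinearMap (BilinForm)

section ProximalPoint

variable {E : Type*}

lemma LinearMap.BilinForm.IsSymm.apply_add_smul_self [AddCommGroup E] [Module ℝ E]
    {β : BilinForm ℝ E} (hβ : β.IsSymm) (a d : E) (t : ℝ) :
    β (a + t • d) (a + t • d) = β a a + 2 * t * β a d + t ^ 2 * β d d := by
  simp only [map_add, map_smul, LinearMap.add_apply, LinearMap.smul_apply, smul_eq_mul,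
    hβ.eq d a]
  ring

lemma LinearMap.BilinForm.IsSymm.apply_add_self [AddCommGroup E] [Module ℝ E]
    {β : BilinForm ℝ E} (hβ : β.IsSymm) (a d : E) :
    β (a + d) (a + d) = β a a + 2 * β a d + β d d := by
  simpa using hβ.apply_add_smul_self a d 1

lemma LinearMap.BilinForm.convexOn_apply_self [AddCommGroup E] [Module ℝ E]
    {β : BilinForm ℝ E} (hβ : β.IsSymm) (hβ0 : ∀ u, 0 ≤ β u u) :
    ConvexOn ℝ Set.univ fun u => β u u := by
  refine ⟨convex_univ, fun a _ b _ s t hs ht hst => ?_⟩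
  obtain rfl : s = 1 - t := by linarith
  have hcomb : (1 - t) • a + t • b = a + t • (b - a) := by module
  have hb : b = a + (b - a) := by abel
  simp only [smul_eq_mul, hcomb]
  rw [hβ.apply_add_smul_self, hb, hβ.apply_add_self, add_sub_cancel_left]
  nlinarith [mul_nonneg (mul_nonneg hs ht) (hβ0 (b - a))]

lemma nonneg_of_forall_add_mul_nonneg {a b : ℝ} (h : ∀ t ∈ Set.Ioc (0 : ℝ) 1, 0 ≤ a + t * b) :
    0 ≤ a := by
  have hlim : Tendsto (fun t : ℝ => a + t * b) (𝓝[>] 0) (𝓝 a) := by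
    have hcont : Continuous fun t : ℝ => a + t * b := by fun_prop
    simpa using (hcont.tendsto 0).mono_left nhdsWithin_le_nhds
  exact ge_of_tendsto hlim (Filter.mem_of_superset (Ioc_mem_nhdsGT one_pos) h)

lemma IsMinOn.three_point [AddCommGroup E] [Module ℝ E] {β : BilinForm ℝ E} (hβ : β.IsSymm)
    {F : E → ℝ} {S : Set E} (hF : ConvexOn ℝ S F) {v w z : E} (hw : w ∈ S) (hz : z ∈ S)
    (hmin : IsMinOn (fun z => F z + β (z - v) (z - v)) S w) :
    F w + β (w - v) (w - v) + β (z - w) (z - w) ≤ F z + β (z - v) (z - v) := by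
  set d := z - w
  have first_order : 0 ≤ F z - F w + 2 * β (w - v) d := by
    refine nonneg_of_forall_add_mul_nonneg (b := β d d) fun t ⟨ht0, ht1⟩ => ?_
    have hseg : w + t • d = (1 - t) • w + t • z := by module
    have hconv : F (w + t • d) ≤ (1 - t) * F w + t * F z := by
      simpa [hseg] using hF.2 hw hz (by linarith) ht0.le (by ring)
    have hle := isMinOn_iff.1 hmin _ (hseg ▸ hF.1 hw hz (by linarith) ht0.le (by ring))
    have hexp : w + t • d - v = (w - v) + t • d := by abel
    simp only [hexp, hβ.apply_add_smul_self] at hle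
    refine nonneg_of_mul_nonneg_right (a := t) ?_ ht0
    nlinarith
  have hzv : z - v = (w - v) + d := by simp [d]
  rw [hzv, hβ.apply_add_self]
  linarith

end ProximalPoint

section ProximalSequence

variable {E : Type*}

structure IsProximalSeq [AddCommGroup E] [Module ℝ E] (β : BilinForm ℝ E) (F : E → ℝ)
    (S : Set E) (x : ℕ → E) : Prop where
  mem_zero : x 0 ∈ S
  mem_succ : ∀ k, x (k + 1) ∈ S
  isMinOn : ∀ k, IsMinOn (fun z => F z + β (z - x k) (z - x k)) S (x (k + 1))

namespace IsProximalSeq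

section Algebraic

variable [AddCommGroup E] [Module ℝ E] {β : BilinForm ℝ E} {F : E → ℝ} {S : Set E} {x : ℕ → E}

theorem mem (hx : IsProximalSeq β F S x) (k : ℕ) : x k ∈ S := by
  cases k
  exacts [hx.mem_zero, hx.mem_succ _]

theorem three_point (hx : IsProximalSeq β F S x) (hβ : β.IsSymm) (hF : ConvexOn ℝ S F) (k : ℕ)
    {z : E} (hz : z ∈ S) :
    F (x (k + 1)) + β (x (k + 1) - x k) (x (k + 1) - x k) + β (z - x (k + 1)) (z - x (k + 1)) ≤
      F z + β (z - x k) (z - x k) :=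
  (hx.isMinOn k).three_point hβ hF (hx.mem_succ k) hz

theorem antitone (hx : IsProximalSeq β F S x) (hβ : β.IsSymm) (hβ0 : ∀ u, 0 ≤ β u u)
    (hF : ConvexOn ℝ S F) : Antitone fun k => F (x k) := by
  refine antitone_nat_of_succ_le fun k => ?_
  have h := hx.three_point hβ hF k (hx.mem k)
  simp only [sub_self, map_zero] at h
  linarith [hβ0 (x (k + 1) - x k), hβ0 (x k - x (k + 1))]

theorem natCast_mul_sub_add_le (hx : IsProximalSeq β F S x) (hβ : β.IsSymm)
    (hβ0 : ∀ u, 0 ≤ β u u) (hF : ConvexOn ℝ S F) {z : E} (hz : z ∈ S) (N : ℕ) :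
    N * (F (x N) - F z) + β (z - x N) (z - x N) ≤ β (z - x 0) (z - x 0) := by
  induction N with
  | zero => simp
  | succ N ih =>
    have hstep := hx.three_point hβ hF N hz
    have hmono : (N : ℝ) * F (x (N + 1)) ≤ N * F (x N) :=
      mul_le_mul_of_nonneg_left (hx.antitone hβ hβ0 hF N.le_succ) N.cast_nonneg
    push_cast
    linarith [hβ0 (x (N + 1) - x N)]

end Algebraic

variable [NormedAddCommGroup E] [NormedSpace ℝ E] {β : BilinForm ℝ E} {F : E → ℝ} {S : Set E}
  {x : ℕ → E} {xs : E} {φ : ℕ → ℕ}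

theorem isMinOn_of_tendsto_subseq (hx : IsProximalSeq β F S x) (hβ : β.IsSymm)
    (hβ0 : ∀ u, 0 ≤ β u u) (hF : ConvexOn ℝ S F) (hFc : ContinuousOn F S) (hxs : xs ∈ S)
    (hφ : StrictMono φ) (hlim : Tendsto (x ∘ φ) atTop (𝓝 xs)) : IsMinOn F S xs := by
  have hFx : Tendsto (fun k => F (x k)) atTop (𝓝 (F xs)) := by
    refine (tendsto_iff_tendsto_subseq_of_antitone (hx.antitone hβ hβ0 hF)
      hφ.tendsto_atTop).2 ((hFc xs hxs).tendsto.comp ?_)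
    exact tendsto_nhdsWithin_iff.2 ⟨hlim, Eventually.of_forall fun j => hx.mem _⟩
  refine isMinOn_iff.2 fun z hz => ?_
  have hrate : Tendsto (fun N : ℕ => F z + β (z - x 0) (z - x 0) / N) atTop (𝓝 (F z)) := by
    simpa only [add_zero] using (tendsto_const_div_atTop_nhds_zero_nat _).const_add (F z)
  refine le_of_tendsto_of_tendsto hFx hrate (eventually_atTop.2 ⟨1, fun N hN => ?_⟩)
  have hN : (0 : ℝ) < N := by exact_mod_cast hN
  have h := hx.natCast_mul_sub_add_le hβ hβ0 hF hz N
  rw [← sub_le_iff_le_add', le_div_iff₀' hN]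
  linarith [hβ0 (z - x N)]

theorem tendsto_apply_sub_self_of_tendsto_subseq (hx : IsProximalSeq β F S x) (hβ : β.IsSymm)
    (hβ0 : ∀ u, 0 ≤ β u u) (hβc : Continuous fun u => β u u) (hF : ConvexOn ℝ S F)
    (hxs : xs ∈ S) (hmin : IsMinOn F S xs) (hφ : StrictMono φ)
    (hlim : Tendsto (x ∘ φ) atTop (𝓝 xs)) :
    Tendsto (fun k => β (xs - x k) (xs - x k)) atTop (𝓝 0) := by
  have hanti : Antitone fun k => β (xs - x k) (xs - x k) := by
    refine antitone_nat_of_succ_le fun k => ?_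
    have h := hx.three_point hβ hF k hxs
    linarith [isMinOn_iff.1 hmin _ (hx.mem (k + 1)), hβ0 (x (k + 1) - x k)]
  refine (tendsto_iff_tendsto_subseq_of_antitone hanti hφ.tendsto_atTop).2 ?_
  have hsub : Tendsto (fun j => xs - x (φ j)) atTop (𝓝 0) := by
    simpa using (tendsto_const_nhds (x := xs)).sub hlim
  have h := (hβc.tendsto 0).comp hsub
  simp only [map_zero] at h
  exact h

theorem exists_isMinOn_tendsto (hx : IsProximalSeq β F S x) (hβ : β.IsSymm)
    (hβc : Continuous fun u => β u u) {α : ℝ} (hα : 0 < α) (hcoer : ∀ u, α * ‖u‖ ^ 2 ≤ β u u)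
    (hS : IsCompact S) (hF : ConvexOn ℝ S F) (hFc : ContinuousOn F S) :
    ∃ xs ∈ S, IsMinOn F S xs ∧ Tendsto x atTop (𝓝 xs) := by
  have hβ0 u : 0 ≤ β u u := (mul_nonneg hα.le (sq_nonneg _)).trans (hcoer u)
  obtain ⟨xs, hxs, φ, hφ, hlim⟩ := hS.tendsto_subseq hx.mem
  have hmin := hx.isMinOn_of_tendsto_subseq hβ hβ0 hF hFc hxs hφ hlim
  refine ⟨xs, hxs, hmin, tendsto_iff_norm_sub_tendsto_zero.2 ?_⟩
  have hsq : Tendsto (fun k => ‖x k - xs‖ ^ 2) atTop (𝓝 0) := by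
    have hd := hx.tendsto_apply_sub_self_of_tendsto_subseq hβ hβ0 hβc hF hxs hmin hφ hlim
    refine squeeze_zero (fun k => sq_nonneg _) (fun k => ?_)
      (by simpa only [zero_div] using hd.div_const α)
    rw [le_div_iff₀' hα, norm_sub_rev]
    exact hcoer _
  simpa [Function.comp_def, Real.sqrt_sq (norm_nonneg _)] using
    (Real.continuous_sqrt.tendsto 0).comp hsq

end IsProximalSeq

end ProximalSequence

lemma dotProduct_mulVec_le_maxEig_mul {ι : Type*} [Fintype ι] [DecidableEq ι]
    {A : Matrix ι ι ℝ} (hA : A.IsHermitian) (v : ι → ℝ) :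
    v ⬝ᵥ (A *ᵥ v) ≤ maxEig hA * (v ⬝ᵥ v) := by
  set U : Matrix ι ι ℝ := (hA.eigenvectorUnitary : Matrix ι ι ℝ) with hU
  have hsU : star U = Uᵀ := by
    rw [Matrix.star_eq_conjTranspose, Matrix.conjTranspose_eq_transpose_of_trivial]
  have hUU : U * Uᵀ = 1 := by
    rw [← hsU]
    exact Matrix.mem_unitaryGroup_iff.1 hA.eigenvectorUnitary.2
  set w : ι → ℝ := v ᵥ* U with hw
  have hquad : v ⬝ᵥ (A *ᵥ v) = ∑ p, hA.eigenvalues p * w p ^ 2 := by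
    conv_lhs => rw [hA.spectral_theorem, Unitary.conjStarAlgAut_apply]
    rw [hsU, ← Matrix.mulVec_mulVec, ← Matrix.mulVec_mulVec, Matrix.mulVec_transpose,
      Matrix.dotProduct_mulVec]
    simp only [dotProduct, Matrix.mulVec_diagonal, hw, sq]
    exact Finset.sum_congr rfl fun p _ => by simp [hU]; ring
  have hnorm : v ⬝ᵥ v = ∑ p, w p ^ 2 := by
    have : ∑ p, w p ^ 2 = w ⬝ᵥ w := by simp [dotProduct, sq]
    rw [this, hw, ← Matrix.dotProduct_mulVec, ← Matrix.mulVec_transpose U v,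
      Matrix.mulVec_mulVec, hUU, Matrix.one_mulVec]
  rw [hquad, hnorm, Finset.mul_sum]
  exact Finset.sum_le_sum fun p _ => mul_le_mul_of_nonneg_right
    (le_ciSup (Set.finite_range _).bddAbove p) (sq_nonneg _)

section Jacobi

variable {m : ℕ} {n : Fin m → ℕ}

def flatₗ : JVec m n →ₗ[ℝ] JIdx m n → ℝ where
  toFun := flat
  map_add' _ _ := rfl
  map_smul' _ _ := rfl

lemma continuous_flat : Continuous (flat : JVec m n → JIdx m n → ℝ) :=
  flatₗ.continuous_of_finiteDimensional

lemma norm_sq_eq_flat_dotProduct (u : JVec m n) : ‖u‖ ^ 2 = flat u ⬝ᵥ flat u := by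
  rw [PiLp.norm_sq_eq_of_L2, dotProduct, ← Finset.univ_sigma_univ, Finset.sum_sigma]
  refine Finset.sum_congr rfl fun i _ => ?_
  rw [EuclideanSpace.norm_sq_eq]
  simp [flat, sq]

def flatBilin (A : Matrix (JIdx m n) (JIdx m n) ℝ) : BilinForm ℝ (JVec m n) :=
  A.toBilin'.compl₁₂ flatₗ flatₗ

@[simp]
lemma flatBilin_apply (A : Matrix (JIdx m n) (JIdx m n) ℝ) (u w : JVec m n) :
    flatBilin A u w = flat u ⬝ᵥ (A *ᵥ flat w) :=
  Matrix.toBilin'_apply' _ _ _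

lemma isSymm_flatBilin {A : Matrix (JIdx m n) (JIdx m n) ℝ} (hA : A.IsSymm) :
    (flatBilin A).IsSymm :=
  ⟨fun u w => (Matrix.isSymm_toBilin'_iff_isSymm.2 hA).eq (flat u) (flat w)⟩

lemma quadF_eq (Q : Matrix (JIdx m n) (JIdx m n) ℝ) (q : JIdx m n → ℝ) (x : JVec m n) :
    quadF Q q x = flatBilin Q x x + q ⬝ᵥ flat x := by
  rw [flatBilin_apply, quadF]

lemma continuous_quadF (Q : Matrix (JIdx m n) (JIdx m n) ℝ) (q : JIdx m n → ℝ) :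
    Continuous (quadF Q q) :=
  (continuous_flat.dotProduct (continuous_const.matrix_mulVec continuous_flat)).add
    (continuous_const.dotProduct continuous_flat)

lemma convexOn_quadF {Q : Matrix (JIdx m n) (JIdx m n) ℝ} (hQ : Q.PosSemidef)
    (q : JIdx m n → ℝ) : ConvexOn ℝ Set.univ (quadF Q q) := by
  have hquad := (flatBilin Q).convexOn_apply_self
    (isSymm_flatBilin (Matrix.isHermitian_iff_isSymm.1 hQ.1))
    fun u => by simpa using hQ.dotProduct_mulVec_nonneg (flat u)
  have hsplit : quadF Q q = (fun u => flatBilin Q u u) + dotProductBilin ℝ ℝ q ∘ₗ flatₗ :=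
    funext (quadF_eq Q q)
  exact hsplit ▸ hquad.add ((dotProductBilin ℝ ℝ q ∘ₗ flatₗ).convexOn convex_univ)

def jacobiForm (Q : Matrix (JIdx m n) (JIdx m n) ℝ) (c : ℝ) : BilinForm ℝ (JVec m n) :=
  c • innerₗ (JVec m n) - flatBilin (Q - blockDiagPart Q)

lemma jacobiForm_apply_self (Q : Matrix (JIdx m n) (JIdx m n) ℝ) (c : ℝ) (u : JVec m n) :
    jacobiForm Q c u u = c * ‖u‖ ^ 2 - flat u ⬝ᵥ ((Q - blockDiagPart Q) *ᵥ flat u) := by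
  simp [jacobiForm]

lemma isSymm_jacobiForm {Q : Matrix (JIdx m n) (JIdx m n) ℝ}
    (hQz : (Q - blockDiagPart Q).IsSymm) (c : ℝ) : (jacobiForm Q c).IsSymm :=
  ⟨fun u w => by
    simp only [jacobiForm, LinearMap.sub_apply, LinearMap.smul_apply, innerₗ_apply_apply,
      real_inner_comm u w, (isSymm_flatBilin hQz).eq u w]⟩

lemma continuous_jacobiForm_apply_self (Q : Matrix (JIdx m n) (JIdx m n) ℝ) (c : ℝ) :
    Continuous fun u : JVec m n => jacobiForm Q c u u := by
  simp only [jacobiForm_apply_self]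
  exact (continuous_const.mul (continuous_norm.pow 2)).sub
    (continuous_flat.dotProduct (continuous_const.matrix_mulVec continuous_flat))

lemma mul_norm_sq_le_jacobiForm {Q : Matrix (JIdx m n) (JIdx m n) ℝ}
    (hQz : (Q - blockDiagPart Q).IsHermitian) (c : ℝ) (u : JVec m n) :
    (c - maxEig hQz) * ‖u‖ ^ 2 ≤ jacobiForm Q c u u := by
  rw [jacobiForm_apply_self, norm_sq_eq_flat_dotProduct]
  linarith [dotProduct_mulVec_le_maxEig_mul hQz (flat u)]

lemma upd_eq_add (x y : JVec m n) (i : Fin m) : upd x i (y i) = x + upd 0 i (y i - x i) := by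
  ext j a
  by_cases h : j = i
  · subst h
    simp [upd]
  · simp [upd, Function.update_of_ne h]

lemma sum_upd_zero (u : JVec m n) : ∑ i, upd 0 i (u i) = u := by
  ext j a
  simp only [upd, WithLp.ofLp_sum, Finset.sum_apply]
  rw [Finset.sum_eq_single j]
  · simp
  · intro i _ hij
    simp [Function.update_of_ne hij.symm]
  · simp

lemma flat_upd_zero (u : JVec m n) (i : Fin m) :
    flat (upd 0 i (u i)) = fun p => if p.1 = i then flat u p else 0 := by
  funext ⟨j, a⟩
  by_cases h : j = i
  · subst h
    simp [flat, upd]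
  · simp [flat, upd, h]

lemma sum_flatBilin_upd_zero (A : Matrix (JIdx m n) (JIdx m n) ℝ) (u : JVec m n) :
    ∑ i, flatBilin A (upd 0 i (u i)) (upd 0 i (u i)) = flatBilin (blockDiagPart A) u u := by
  simp only [flatBilin_apply, flat_upd_zero, dotProduct, mulVec, blockDiagPart, of_apply,
    ite_mul, zero_mul, mul_ite, mul_zero]
  rw [Finset.sum_comm]
  refine Finset.sum_congr rfl fun p _ => ?_
  rw [Finset.sum_ite_eq Finset.univ p.1, if_pos (Finset.mem_univ _)]
  simp only [eq_comm]

lemma sum_quadF_upd {Q : Matrix (JIdx m n) (JIdx m n) ℝ} (hQ : Q.IsSymm) (q : JIdx m n → ℝ)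
    (c : ℝ) (x y : JVec m n) :
    ∑ i, (quadF Q q (upd x i (y i)) + c * ‖y i - x i‖ ^ 2) =
      (m - 1) * quadF Q q x + (quadF Q q y + jacobiForm Q c (y - x) (y - x)) := by
  set u := y - x
  have hB := isSymm_flatBilin hQ
  have hexpand (v : JVec m n) : quadF Q q (x + v) =
      quadF Q q x + (2 * flatBilin Q x v + q ⬝ᵥ flat v) + flatBilin Q v v := by
    rw [quadF_eq, quadF_eq, hB.apply_add_self, show flat (x + v) = flat x + flat v from rfl,
      dotProduct_add]
    ring
  have hflat_sum : ∑ i, flat (upd 0 i (u i)) = flat u := by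
    exact (map_sum flatₗ _ _).symm.trans (congrArg flatₗ (sum_upd_zero u))
  have hlin : ∑ i, (2 * flatBilin Q x (upd 0 i (u i)) + q ⬝ᵥ flat (upd 0 i (u i))) =
      2 * flatBilin Q x u + q ⬝ᵥ flat u := by
    rw [Finset.sum_add_distrib, ← Finset.mul_sum, ← map_sum, sum_upd_zero, ← dotProduct_sum,
      hflat_sum]
  have hterm (i : Fin m) : quadF Q q (upd x i (y i)) + c * ‖y i - x i‖ ^ 2 =
      quadF Q q x + (2 * flatBilin Q x (upd 0 i (u i)) + q ⬝ᵥ flat (upd 0 i (u i))) +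
        flatBilin Q (upd 0 i (u i)) (upd 0 i (u i)) + c * ‖u i‖ ^ 2 := by
    rw [upd_eq_add, hexpand]
    rfl
  have hy : y = x + u := by simp [u]
  simp only [hterm, Finset.sum_add_distrib, hlin, sum_flatBilin_upd_zero, ← Finset.mul_sum,
    ← PiLp.norm_sq_eq_of_L2, Finset.sum_const, Finset.card_univ, Fintype.card_fin, nsmul_eq_mul]
  rw [hy, hexpand, jacobiForm_apply_self, sub_mulVec, dotProduct_sub]
  simp only [flatBilin_apply]
  ring

lemma isMinOn_jacobi_step {Q : Matrix (JIdx m n) (JIdx m n) ℝ} (hQ : Q.IsSymm)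
    (q : JIdx m n → ℝ) (c : ℝ) (X : ∀ i : Fin m, Set (EuclideanSpace ℝ (Fin (n i))))
    (x y : JVec m n)
    (hy : ∀ i, ∀ z ∈ X i, quadF Q q (upd x i (y i)) + c * ‖y i - x i‖ ^ 2 ≤
      quadF Q q (upd x i z) + c * ‖z - x i‖ ^ 2) :
    IsMinOn (fun z => quadF Q q z + jacobiForm Q c (z - x) (z - x)) {z | ∀ i, z i ∈ X i} y := by
  refine isMinOn_iff.2 fun z hz => ?_
  have hsum := Finset.sum_le_sum fun i (_ : i ∈ Finset.univ) => hy i (z i) (hz i)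
  rw [sum_quadF_upd hQ, sum_quadF_upd hQ] at hsum
  linarith

end Jacobi

theorem stmt_0_general {m : ℕ} {n : Fin m → ℕ}
    (X : ∀ i : Fin m, Set (EuclideanSpace ℝ (Fin (n i))))
    (hXcpt : ∀ i, IsCompact (X i))
    (hXcvx : ∀ i, Convex ℝ (X i))
    (Q : Matrix (JIdx m n) (JIdx m n) ℝ) (hQ : Q.PosSemidef)
    (q : JIdx m n → ℝ)
    (hQz : (Q - blockDiagPart Q).IsHermitian)
    (c : ℝ) (hc : maxEig hQz < c)
    (x : ℕ → JVec m n) (hx0 : ∀ i, x 0 i ∈ X i)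
    (hrec : ∀ k : ℕ, ∀ i : Fin m, x (k + 1) i ∈ X i ∧
      ∀ z ∈ X i,
        quadF Q q (upd (x k) i (x (k + 1) i)) + c * ‖x (k + 1) i - x k i‖ ^ 2 ≤
          quadF Q q (upd (x k) i z) + c * ‖z - x k i‖ ^ 2) :
    ∃ xs : JVec m n, (∀ i, xs i ∈ X i) ∧
      (∀ y : JVec m n, (∀ i, y i ∈ X i) → quadF Q q xs ≤ quadF Q q y) ∧
      Tendsto x atTop (𝓝 xs) := by
  set S : Set (JVec m n) := {y | ∀ i, y i ∈ X i}
  have hS : IsCompact S := by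
    convert (PiLp.homeomorph 2 _).isCompact_preimage.2 (isCompact_univ_pi hXcpt) using 1
    ext y
    simp [S, PiLp.homeomorph]
  have hSc : Convex ℝ S := fun y hy z hz a b ha hb hab i => hXcvx i (hy i) (hz i) ha hb hab
  have hQs := Matrix.isHermitian_iff_isSymm.1 hQ.1
  have hx : IsProximalSeq (jacobiForm Q c) (quadF Q q) S x :=
    ⟨hx0, fun k i => (hrec k i).1,
      fun k => isMinOn_jacobi_step hQs q c X (x k) (x (k + 1)) fun i => (hrec k i).2⟩
  obtain ⟨xs, hxs, hmin, hlim⟩ := hx.exists_isMinOn_tendsto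
    (isSymm_jacobiForm (Matrix.isHermitian_iff_isSymm.1 hQz) c)
    (continuous_jacobiForm_apply_self Q c) (sub_pos.2 hc) (mul_norm_sq_le_jacobiForm hQz c)
    hS ((convexOn_quadF hQ q).subset (Set.subset_univ S) hSc) (continuous_quadF Q q).continuousOn
  exact ⟨xs, hxs, isMinOn_iff.1 hmin, hlim⟩

/-- Theorem 1: for the quadratic objective `f(x) = xᵀQx + qᵀx` with `Q ⪰ 0` symmetric,
if `c > λ_max(Q_z)` (with `Q_z = Q − Q_d`), then from any initialization `x₀ ∈ X` the
regularized Jacobi iterates converge to a point `x* ∈ X` minimizing `f` over `X`. -/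
theorem stmt_0 {m : ℕ} {n : Fin m → ℕ} [Nonempty (JIdx m n)]
    (X : ∀ i : Fin m, Set (EuclideanSpace ℝ (Fin (n i))))
    (hXne : ∀ i, (X i).Nonempty)
    (hXcpt : ∀ i, IsCompact (X i))
    (hXcvx : ∀ i, Convex ℝ (X i))
    (Q : Matrix (JIdx m n) (JIdx m n) ℝ) (hQ : Q.PosSemidef)
    (q : JIdx m n → ℝ)
    (hQz : (Q - blockDiagPart Q).IsHermitian)
    (c : ℝ) (hc : maxEig hQz < c)
    (x : ℕ → JVec m n) (hx0 : ∀ i, x 0 i ∈ X i)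
    (hrec : ∀ k : ℕ, ∀ i : Fin m, x (k + 1) i ∈ X i ∧
      ∀ z ∈ X i,
        quadF Q q (upd (x k) i (x (k + 1) i)) + c * ‖x (k + 1) i - x k i‖ ^ 2 ≤
          quadF Q q (upd (x k) i z) + c * ‖z - x k i‖ ^ 2) :
    ∃ xs : JVec m n, (∀ i, xs i ∈ X i) ∧
      (∀ y : JVec m n, (∀ i, y i ∈ X i) → quadF Q q xs ≤ quadF Q q y) ∧
      Tendsto x atTop (𝓝 xs) :=
  stmt_0_general X hXcpt hXcvx Q hQ q hQz c hc x hx0 hrec
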